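/- The map τ: Bl_E(S) → ℙ³(ℝ) × ℙ³(ℝ), ([x,y],[w]) ↦ ([w],[r,s,t,u]) with r = Σᵢ wᵢxᵢ, s = 2(−w₁y₀ + w₀y₁ − w₃y₂ + w₂y₃), t = 2(−w₂y₀ + w₃y₁ + w₀y₂ − w₁y₃), u = 2(−w₃y₀ − w₂y₁ + w₁y₂ + w₀y₃), is well-defined on Bl_E(S): the quadruple (r,s,t,u) never vanishes identically on Bl_E(S). -/

import Mathlib

/-!
On `Bl_E(S)` the vector `x` is parallel to `w`, so `r = ⟨w, x⟩ = 0` forces `x = 0` as `w ≠ 0`.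
Reading `y` and `w` as quaternions, `y * star w` has real part `⟨y, w⟩ = 0` and imaginary part
`(s, t, u) / 2`; so `s = t = u = 0` forces `y * star w = 0`, hence `y = 0` since `ℍ[ℝ]` is a
division ring.
-/

/-- The defining conditions of `Bl_E(S) ⊂ ℙ⁷(ℝ) × ℙ³(ℝ)`, on homogeneous coordinates. -/
def inBl (x y w : Fin 4 → ℝ) : Prop :=
  (∑ i : Fin 4, x i * y i = 0) ∧ (∑ i : Fin 4, y i * w i = 0) ∧
    ∀ i j : Fin 4, x i * w j = x j * w i

/-- The quadruple `(r, s, t, u)` of `τ([x, y], [w])`. -/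
def tauP (x y w : Fin 4 → ℝ) : Fin 4 → ℝ :=
  ![w 0 * x 0 + w 1 * x 1 + w 2 * x 2 + w 3 * x 3,
    2 * (-(w 1 * y 0) + w 0 * y 1 - w 3 * y 2 + w 2 * y 3),
    2 * (-(w 2 * y 0) + w 3 * y 1 + w 0 * y 2 - w 1 * y 3),
    2 * (-(w 3 * y 0) - w 2 * y 1 + w 1 * y 2 + w 0 * y 3)]

open Finset Quaternion

theorem mul_sum_mul_eq_sum_mul_self_mul {ι R : Type*} [Fintype ι] [CommRing R] {x w : ι → R}
    (hxw : ∀ i j, x i * w j = x j * w i) (i : ι) :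
    w i * ∑ j, w j * x j = (∑ j, w j * w j) * x i := by
  rw [mul_sum, sum_mul]
  refine sum_congr rfl fun j _ => ?_
  linear_combination w j * hxw j i

theorem eq_zero_of_mul_eq_mul_of_sum_mul_eq_zero {ι : Type*} [Fintype ι] {x w : ι → ℝ}
    (hw : w ≠ 0) (hxw : ∀ i j, x i * w j = x j * w i) (horth : ∑ j, w j * x j = 0) : x = 0 := by
  have hw' : ∑ j, w j * w j ≠ 0 := by
    simpa [sum_mul_self_eq_zero_iff, funext_iff] using hw
  funext i
  simpa [horth, hw'] using (mul_sum_mul_eq_sum_mul_self_mul hxw i).symm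

-- `v ↦ v 0 + v 1 • i + v 2 • j + v 3 • k`
local notation "quat" => Equiv.symm (Quaternion.equivTuple ℝ)

theorem quat_eq_zero_iff {v : Fin 4 → ℝ} : quat v = 0 ↔ v = 0 := by
  rw [Equiv.symm_apply_eq, funext_iff, funext_iff]
  simp [Fin.forall_fin_succ]

theorem quat_mul_star_quat (x y w : Fin 4 → ℝ) :
    quat y * star (quat w) =
      quat ![∑ i, y i * w i, tauP x y w 1 / 2, tauP x y w 2 / 2, tauP x y w 3 / 2] := by
  ext <;> simp only [re_mul, imI_mul, imJ_mul, imK_mul, re_star, imI_star, imJ_star, imK_star] <;>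
    simp [tauP, Fin.sum_univ_four] <;> ring

/-- `τ` is well-defined on `Bl_E(S)`: the quadruple `(r, s, t, u)` never vanishes there. -/
theorem stmt16 (x y w : Fin 4 → ℝ) (h : inBl x y w) (hxy : ¬(x = 0 ∧ y = 0))
    (hw : w ≠ 0) : tauP x y w ≠ 0 := by
  obtain ⟨-, hyw, hxw⟩ := h
  intro hτ
  refine hxy ⟨eq_zero_of_mul_eq_mul_of_sum_mul_eq_zero hw hxw ?_, ?_⟩
  · simpa [tauP, Fin.sum_univ_four] using congrFun hτ 0
  · have hw' : star (quat w) ≠ 0 := star_ne_zero.mpr (quat_eq_zero_iff.not.mpr hw)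
    have hprod : quat y * star (quat w) = 0 := by
      rw [quat_mul_star_quat x, hyw, hτ, quat_eq_zero_iff]
      ext i
      fin_cases i <;> simp
    exact quat_eq_zero_iff.mp ((mul_eq_zero.mp hprod).resolve_right hw')
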